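/- Suppose that for every even L the linear functional ⟨·⟩ is reflection positive for reflections through edges and the two-point function G_L is torus symmetric, that there are constants C₁ > 0 and M ∈ (0,∞) such that liminf over even L → ∞ of (1/|T_L|) Σ_{x∈T_L} G_L(o,x) ≥ C₁, and G_L(x,y) ≤ M for all even L and all x, y ∈ T_L. Then for any ε ∈ (0, 1/2) and any C < C₁, for all sufficiently large even L the following holds: for every x ∈ T_L such that for every i ∈ {1,…,d} the coordinate |x·e_i| is odd and lies in (0, εL), one has G_L(o, x) ≥ M − (1/4 − ε/2)^{−d} (M − C). -/

import Mathlib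

namespace RPPaper

/-- The torus `T_L = (ℤ/Lℤ)^d`. -/
abbrev Torus (d L : ℕ) : Type := Fin d → ZMod L

/-- The unit vector `e i`. -/
def unitVec {d L : ℕ} (i : Fin d) : Torus d L := fun k => if k = i then 1 else 0

/-- The point `a • e i` on the torus. -/
def axis {d L : ℕ} (i : Fin d) (a : ZMod L) : Torus d L := fun k => if k = i then a else 0

/-- The integer representative of `a : ZMod L` in the interval `(-L/2, L/2]`. -/
def coordRep (L : ℕ) [NeZero L] (a : ZMod L) : ℤ :=
  if (a.val : ℤ) ≤ (L : ℤ) / 2 then (a.val : ℤ) else (a.val : ℤ) - (L : ℤ)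

/-- The reflection of the torus in the hyperplane `{z : z·e i = t/2}` (here `t = 2m`);
it is a reflection through edges if `t` is odd, and through vertices if `t` is even. -/
def reflect {d L : ℕ} (i : Fin d) (t : ℕ) (x : Torus d L) : Torus d L :=
  Function.update x i ((t : ZMod L) - x i)

/-- The positive half `T_L^+` of the torus associated to the reflection in the hyperplane
`{z : z·e i = t/2}`. -/
def posHalf (d L : ℕ) [NeZero L] (i : Fin d) (t : ℕ) : Finset (Torus d L) :=
  if t % 2 = 1 then Finset.univ.filter (fun x => (x i - (((t + 1) / 2 : ℕ) : ZMod L)).val < L / 2)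
  else Finset.univ.filter (fun x => (x i - ((t / 2 : ℕ) : ZMod L)).val ≤ L / 2)

/-- The negative half `T_L^- = θ(T_L^+)`. -/
def negHalf (d L : ℕ) [NeZero L] (i : Fin d) (t : ℕ) : Finset (Torus d L) :=
  (posHalf d L i t).image (reflect i t)

/-- The state space `S = ∏_{x ∈ T_L} Σ_x` (all local state spaces equal to `Sig`). -/
abbrev MState (d L : ℕ) (Sig : Type*) : Type _ := Torus d L → Sig

/-- `A : S → ℝ` has domain `D` if it depends only on the local states in `D`. -/
def HasDomain {d L : ℕ} {Sig : Type*} (A : MState d L Sig → ℝ) (D : Set (Torus d L)) : Prop :=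
  ∀ w₁ w₂ : MState d L Sig, (∀ x ∈ D, w₁ x = w₂ x) → A w₁ = A w₂

/-- The action `θA (w) = A (θ w)`, where `(θ w) x = w (θ x)`, of the reflection on functions. -/
def reflectFun {d L : ℕ} {Sig : Type*} (i : Fin d) (t : ℕ) (A : MState d L Sig → ℝ) :
    MState d L Sig → ℝ := fun w => A (fun x => w (reflect i t x))

/-- `⟨·⟩` is reflection positive with respect to the reflection in the hyperplane
`{z : z·e i = t/2}`: for all `A, B ∈ A_L^+` (members of the algebra with domain `T_L^+`),
`⟨A·θB⟩ = ⟨B·θA⟩` and `⟨A·θA⟩ ≥ 0`. -/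
def IsRP {d L : ℕ} {Sig : Type*} [NeZero L] (AL : Subalgebra ℝ (MState d L Sig → ℝ))
    (phi : (MState d L Sig → ℝ) →ₗ[ℝ] ℝ) (i : Fin d) (t : ℕ) : Prop :=
  ∀ A B : MState d L Sig → ℝ, A ∈ AL → B ∈ AL →
    HasDomain A ↑(posHalf d L i t) → HasDomain B ↑(posHalf d L i t) →
    phi (A * reflectFun i t B) = phi (B * reflectFun i t A) ∧ 0 ≤ phi (A * reflectFun i t A)

/-- Reflection positivity for all reflections through edges. -/
def RPEdges {d L : ℕ} {Sig : Type*} [NeZero L] (AL : Subalgebra ℝ (MState d L Sig → ℝ))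
    (phi : (MState d L Sig → ℝ) →ₗ[ℝ] ℝ) : Prop :=
  ∀ (i : Fin d) (t : ℕ), t < 2 * L → t % 2 = 1 → IsRP AL phi i t

/-- Reflection positivity for all reflections through vertices. -/
def RPVertices {d L : ℕ} {Sig : Type*} [NeZero L] (AL : Subalgebra ℝ (MState d L Sig → ℝ))
    (phi : (MState d L Sig → ℝ) →ₗ[ℝ] ℝ) : Prop :=
  ∀ (i : Fin d) (t : ℕ), t < 2 * L → t % 2 = 0 → IsRP AL phi i t

/-- The single-site function `F^j_x`, obtained from a function `f : Sig → ℝ` of the local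
state at the origin by the (path-independent) sequence of reflections sending `o` to `x`. -/
def site {d L : ℕ} {Sig : Type*} (f : Sig → ℝ) (x : Torus d L) : MState d L Sig → ℝ :=
  fun w => f (w x)

/-- The two-point function `G_L(x,y) = ⟨F²_x F²_y ∏_{z ≠ x,y} F¹_z⟩`. -/
noncomputable def twoPoint {d L : ℕ} {Sig : Type*} [NeZero L]
    (phi : (MState d L Sig → ℝ) →ₗ[ℝ] ℝ) (f1 f2 : Sig → ℝ) (x y : Torus d L) : ℝ :=
  phi (fun w => f2 (w x) * f2 (w y) * ∏ z ∈ (Finset.univ.erase x).erase y, f1 (w z))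

/-- Torus symmetry: `⟨∏_{x∈A}F¹_x ∏_{x∈B}F²_x⟩ = ⟨∏_{x∈A+z}F¹_x ∏_{x∈B+z}F²_x⟩`. -/
def TorusSymmetric {d L : ℕ} {Sig : Type*} [NeZero L]
    (phi : (MState d L Sig → ℝ) →ₗ[ℝ] ℝ) (f1 f2 : Sig → ℝ) : Prop :=
  ∀ (A B : Finset (Torus d L)) (z : Torus d L),
    phi (fun w => (∏ x ∈ A, f1 (w x)) * ∏ x ∈ B, f2 (w x)) =
      phi (fun w => (∏ x ∈ A, f1 (w (x + z))) * ∏ x ∈ B, f2 (w (x + z)))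

/-!
Reflect once, in the edge plane `{z · e_i = 1/2}` for a direction `i` with `x i ≠ 0`. Let `P`
be the positive half, `N = |P|`, and `S_w = F²_w ∏_{u ∈ P ∖ {w}} F¹_u` for `w ∈ P`; then
`⟨S_w · θS_{w'}⟩ = G(w, θw')`, so reflection positivity makes the `P × P` matrix
`K(w, w') = G(w, θw')` positive semidefinite. By torus symmetry every row and column sum of
`K` is a sum of `G(o, ·)` over `N` distinct points, hence at least `N M - |T_L| (M - C)` by the
Cesàro bound and `G ≤ M`. Testing `K` on `N (δ_{z₀} + δ_{z₁}) - 2`, with `z₀, z₁ ∈ P` chosen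
so that `θz₁ - z₀ = x`, gives `M - G(o, x) ≤ 16 (M - C)`, and `16 ≤ (1/4 - ε/2)^{-d}` as
`d ≥ 2`.
-/

open Finset

lemma prod_erase_mul_prod_compl_erase {α β : Type*} [Fintype α] [DecidableEq α]
    [CommMonoid β] {s : Finset α} {a b : α} (ha : a ∈ s) (hb : b ∉ s) (f : α → β) :
    (∏ x ∈ s.erase a, f x) * ∏ x ∈ sᶜ.erase b, f x = ∏ x ∈ (univ.erase a).erase b, f x := by
  rw [← prod_union (disjoint_compl_right.mono (erase_subset a s) (erase_subset b sᶜ))]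
  congr 1
  ext x
  simp only [mem_union, mem_erase, mem_compl, mem_univ, and_true]
  constructor
  · rintro (⟨hxa, hx⟩ | ⟨hxb, hx⟩)
    · exact ⟨by rintro rfl; exact hb hx, hxa⟩
    · exact ⟨hxb, by rintro rfl; exact hx ha⟩
  · rintro ⟨hxb, hxa⟩
    by_cases hx : x ∈ s
    exacts [Or.inl ⟨hxa, hx⟩, Or.inr ⟨hxb, hx⟩]

lemma sum_univ_sub_le_sum_comp {α : Type*} [Fintype α] [DecidableEq α] {g : α → ℝ} {M : ℝ}
    (hg : ∀ x, g x ≤ M) (s : Finset α) {F : α → α} (hF : Function.Injective F) :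
    ∑ x, g x - (Fintype.card α - #s) * M ≤ ∑ x ∈ s, g (F x) := by
  have hsplit := sum_add_sum_compl (s.image F) g
  have hcompl : ∑ x ∈ (s.image F)ᶜ, g x ≤ #(s.image F)ᶜ * M := by
    simpa using sum_le_card_nsmul _ _ _ fun x _ => hg x
  have hcard : (#(s.image F)ᶜ : ℝ) = Fintype.card α - #s := by
    rw [card_compl, card_image_of_injective _ hF, Nat.cast_sub (card_le_univ s)]
  rw [← sum_image hF.injOn]
  rw [hcard] at hcompl
  linarith

lemma sixteen_le_inv_pow {β : ℝ} (hβ : 0 < β) (hβ4 : β ≤ 1 / 4) {d : ℕ} (hd : 2 ≤ d) :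
    16 ≤ (β ^ d)⁻¹ := by
  have hβd : β ^ d ≤ 16⁻¹ :=
    calc β ^ d ≤ β ^ 2 := pow_le_pow_of_le_one hβ.le (by linarith) hd
      _ ≤ (1 / 4) ^ 2 := by gcongr
      _ = 16⁻¹ := by norm_num
  exact (le_inv_comm₀ (by norm_num) (by positivity)).2 hβd

lemma sq_mul_sub_le_of_posSemidef {α : Type*} [DecidableEq α] {P : Finset α} {K : α → α → ℝ}
    {M B : ℝ} {z₀ z₁ : α} (hz₀ : z₀ ∈ P) (hz₁ : z₁ ∈ P)
    (hpsd : ∀ c : α → ℝ, 0 ≤ ∑ w ∈ P, ∑ w' ∈ P, c w * c w' * K w w')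
    (hK : ∀ w ∈ P, ∀ w' ∈ P, K w w' ≤ M)
    (hrow : ∀ w ∈ P, B ≤ ∑ w' ∈ P, K w w') (hcol : ∀ w' ∈ P, B ≤ ∑ w ∈ P, K w w') :
    (#P : ℝ) ^ 2 * (M - K z₀ z₁) ≤ 8 * #P * (#P * M - B) := by
  set n : ℝ := (#P : ℝ)
  set c : α → ℝ := fun w =>
    n * (if w = z₀ then 1 else 0) + n * (if w = z₁ then 1 else 0) - 2
  have hc : ∀ F : α → ℝ, ∑ w ∈ P, c w * F w = n * F z₀ + n * F z₁ - 2 * ∑ w ∈ P, F w := by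
    intro F
    simp only [c, add_mul, sub_mul, mul_assoc, ← mul_sum, sum_add_distrib, sum_sub_distrib,
      ite_mul, one_mul, zero_mul, sum_ite_eq', if_pos hz₀, if_pos hz₁]
  set E : α → ℝ := fun w => n * K w z₀ + n * K w z₁ - 2 * ∑ w' ∈ P, K w w'
  have hQ : ∑ w ∈ P, ∑ w' ∈ P, c w * c w' * K w w'
      = n * E z₀ + n * E z₁ - 2 * ∑ w ∈ P, E w := by
    simp only [mul_assoc, ← mul_sum, hc (K _)]
    exact hc E
  have hn : 0 ≤ n := Nat.cast_nonneg _
  have hE₀ : E z₀ ≤ n * M + n * K z₀ z₁ - 2 * B := by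
    have := mul_le_mul_of_nonneg_left (hK z₀ hz₀ z₀ hz₀) hn
    linarith [hrow z₀ hz₀]
  have hE₁ : E z₁ ≤ 2 * (n * M) - 2 * B := by
    have := mul_le_mul_of_nonneg_left (hK z₁ hz₁ z₀ hz₀) hn
    have := mul_le_mul_of_nonneg_left (hK z₁ hz₁ z₁ hz₁) hn
    linarith [hrow z₁ hz₁]
  have hEsum : 2 * (n * B) - 2 * (n * (n * M)) ≤ ∑ w ∈ P, E w := by
    have hsum : ∑ w ∈ P, ∑ w' ∈ P, K w w' ≤ n * (n * M) := by
      simpa using sum_le_card_nsmul P _ _ fun w hw =>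
        (sum_le_card_nsmul P _ _ fun w' hw' => hK w hw w' hw')
    have h₀ := mul_le_mul_of_nonneg_left (hcol z₀ hz₀) hn
    have h₁ := mul_le_mul_of_nonneg_left (hcol z₁ hz₁) hn
    simp only [E, sum_sub_distrib, sum_add_distrib, ← mul_sum]
    linarith
  have h₀ := mul_le_mul_of_nonneg_left hE₀ hn
  have h₁ := mul_le_mul_of_nonneg_left hE₁ hn
  nlinarith [hpsd c]

section Reflection
variable {d L : ℕ}

lemma reflect_involutive (i : Fin d) (t : ℕ) :
    Function.Involutive (reflect (d := d) (L := L) i t) := by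
  intro x
  funext j
  by_cases h : j = i
  · subst h
    simp [reflect]
  · simp [reflect, Function.update, h]

variable [NeZero L]

lemma mem_posHalf_one {i : Fin d} {z : Torus d L} :
    z ∈ posHalf d L i 1 ↔ (z i - 1).val < L / 2 := by
  simp [posHalf]

lemma val_neg_lt_half_iff (hL : Even L) (a : ZMod L) :
    (-a).val < L / 2 ↔ ¬(a - 1).val < L / 2 := by
  obtain ⟨k, rfl⟩ := hL
  have hk : 0 < k := by have := NeZero.pos (k + k); omega
  have : Fact (1 < k + k) := ⟨by omega⟩
  rcases eq_or_ne a 0 with rfl | ha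
  · rw [zero_sub, neg_zero, ZMod.val_zero, ZMod.neg_val, if_neg one_ne_zero, ZMod.val_one]
    omega
  · have ha1 : 1 ≤ a.val := ZMod.val_pos.2 ha
    rw [ZMod.neg_val, if_neg ha, ZMod.val_sub (by rwa [ZMod.val_one]), ZMod.val_one]
    omega

lemma reflect_mem_posHalf_one_iff (hL : Even L) {i : Fin d} {z : Torus d L} :
    reflect i 1 z ∈ posHalf d L i 1 ↔ z ∉ posHalf d L i 1 := by
  rw [mem_posHalf_one, mem_posHalf_one, reflect, Function.update_self, Nat.cast_one,
    sub_sub_cancel_left]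
  exact val_neg_lt_half_iff hL (z i)

lemma negHalf_one_eq_compl (hL : Even L) (i : Fin d) :
    negHalf d L i 1 = (posHalf d L i 1)ᶜ := by
  ext z
  simp only [negHalf, mem_image, mem_compl]
  constructor
  · rintro ⟨y, hy, rfl⟩
    exact (reflect_mem_posHalf_one_iff hL).1 (by rwa [reflect_involutive])
  · exact fun hz =>
      ⟨reflect i 1 z, (reflect_mem_posHalf_one_iff hL).2 hz, reflect_involutive i 1 z⟩

lemma card_posHalf_one (hL : Even L) (i : Fin d) : 2 * #(posHalf d L i 1) = L ^ d := by
  have h := card_add_card_compl (posHalf d L i 1)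
  rw [← negHalf_one_eq_compl hL, negHalf,
    card_image_of_injective _ (reflect_involutive i 1).injective] at h
  simp only [Fintype.card_fun, ZMod.card, Fintype.card_fin] at h
  omega

lemma exists_mem_posHalf_one_add_notMem (hL : Even L) {i : Fin d} {x : Torus d L}
    (hx : x i ≠ 0) : ∃ z ∈ posHalf d L i 1, x + z ∉ posHalf d L i 1 := by
  obtain ⟨k, rfl⟩ := hL
  have hq : 0 < (x i).val := ZMod.val_pos.2 hx
  have hqL : (x i).val < k + k := ZMod.val_lt _
  obtain ⟨b, hbk, hkb, hbL⟩ :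
      ∃ b : ℕ, b < k ∧ k ≤ (x i).val + b ∧ (x i).val + b < k + k := by
    by_cases h : (x i).val ≤ k
    · exact ⟨k - 1, by omega, by omega, by omega⟩
    · exact ⟨0, by omega, by omega, by omega⟩
  have hbval : ((b : ℕ) : ZMod (k + k)).val = b := ZMod.val_natCast_of_lt (by omega)
  have hz : axis i (1 + (b : ZMod (k + k))) i = 1 + (b : ZMod (k + k)) := by simp [axis]
  refine ⟨axis i (1 + (b : ZMod (k + k))), ?_, ?_⟩ <;> rw [mem_posHalf_one]
  · rw [hz, add_sub_cancel_left, hbval]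
    exact hbk.trans_le (by omega)
  · rw [Pi.add_apply, hz, show x i + (1 + (b : ZMod (k + k))) - 1 = x i + b by ring,
      ZMod.val_add_of_lt (by omega), hbval]
    omega

end Reflection

section Gram
variable {d L : ℕ} {Sig : Type*}

def markedProd (f1 f2 : Sig → ℝ) (P : Finset (Torus d L)) (w : Torus d L) :
    MState d L Sig → ℝ :=
  fun ω => f2 (ω w) * ∏ u ∈ P.erase w, f1 (ω u)

lemma markedProd_mem {AL : Subalgebra ℝ (MState d L Sig → ℝ)} {f1 f2 : Sig → ℝ}
    (hF1 : ∀ u, site f1 u ∈ AL) (hF2 : ∀ u, site f2 u ∈ AL) (P : Finset (Torus d L))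
    (w : Torus d L) : markedProd f1 f2 P w ∈ AL := by
  have h : markedProd f1 f2 P w = site f2 w * ∏ u ∈ P.erase w, site f1 u := by
    funext ω
    simp [markedProd, site, prod_apply]
  rw [h]
  exact mul_mem (hF2 w) (prod_mem fun u _ => hF1 u)

lemma markedProd_hasDomain (f1 f2 : Sig → ℝ) {P : Finset (Torus d L)} {w : Torus d L}
    (hw : w ∈ P) : HasDomain (markedProd f1 f2 P w) P := by
  intro ω₁ ω₂ h
  simp only [markedProd, h w hw]
  congr 1
  exact prod_congr rfl fun u hu => by rw [h u (mem_of_mem_erase hu)]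

variable [NeZero L]

lemma markedProd_mul_reflectFun (hL : Even L) {i : Fin d} (f1 f2 : Sig → ℝ)
    {w w' : Torus d L} (hw : w ∈ posHalf d L i 1) (hw' : w' ∈ posHalf d L i 1) :
    markedProd f1 f2 (posHalf d L i 1) w *
        reflectFun i 1 (markedProd f1 f2 (posHalf d L i 1) w')
      = fun ω => f2 (ω w) * f2 (ω (reflect i 1 w')) *
          ∏ z ∈ (univ.erase w).erase (reflect i 1 w'), f1 (ω z) := by
  funext ω
  have hinj := (reflect_involutive (d := d) (L := L) i 1).injective
  have hreflect : ∏ u ∈ (posHalf d L i 1).erase w', f1 (ω (reflect i 1 u))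
      = ∏ v ∈ (posHalf d L i 1)ᶜ.erase (reflect i 1 w'), f1 (ω v) := by
    rw [← negHalf_one_eq_compl hL, negHalf, ← image_erase hinj, prod_image hinj.injOn]
  have hθw' : reflect i 1 w' ∉ posHalf d L i 1 :=
    fun h => (reflect_mem_posHalf_one_iff hL).1 h hw'
  simp only [Pi.mul_apply, markedProd, reflectFun, hreflect,
    ← prod_erase_mul_prod_compl_erase hw hθw']
  ring

lemma twoPoint_posSemidef (hL : Even L) {AL : Subalgebra ℝ (MState d L Sig → ℝ)}
    {phi : (MState d L Sig → ℝ) →ₗ[ℝ] ℝ} {i : Fin d} (hRP : IsRP AL phi i 1) {f1 f2 : Sig → ℝ}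
    (hF1 : ∀ u, site f1 u ∈ AL) (hF2 : ∀ u, site f2 u ∈ AL) (c : Torus d L → ℝ) :
    0 ≤ ∑ w ∈ posHalf d L i 1, ∑ w' ∈ posHalf d L i 1,
      c w * c w' * twoPoint phi f1 f2 w (reflect i 1 w') := by
  set P := posHalf d L i 1
  set S := markedProd f1 f2 P
  set A := ∑ w ∈ P, c w • S w
  have hA : A ∈ AL := sum_mem fun w _ => AL.smul_mem (markedProd_mem hF1 hF2 P w) _
  have hAdom : HasDomain A P := by
    intro ω₁ ω₂ h
    simp only [A, Finset.sum_apply, Pi.smul_apply]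
    exact sum_congr rfl fun w hw => congrArg (c w • ·) (markedProd_hasDomain f1 f2 hw ω₁ ω₂ h)
  have hθA : reflectFun i 1 A = ∑ w' ∈ P, c w' • reflectFun i 1 (S w') := by
    funext ω
    simp [A, reflectFun, Finset.sum_apply]
  have hgram := (hRP A A hA hA hAdom hAdom).2
  rw [hθA, sum_mul_sum, map_sum] at hgram
  refine hgram.trans_eq (sum_congr rfl fun w hw => ?_)
  rw [map_sum]
  refine sum_congr rfl fun w' hw' => ?_
  rw [smul_mul_smul_comm, map_smul, smul_eq_mul, markedProd_mul_reflectFun hL f1 f2 hw hw']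
  rfl

end Gram

section Translation
variable {d L : ℕ} [NeZero L] {Sig : Type*} {phi : (MState d L Sig → ℝ) →ₗ[ℝ] ℝ}
  {f1 f2 : Sig → ℝ}

lemma twoPoint_eq_of_ne {a b : Torus d L} (hab : a ≠ b) :
    twoPoint phi f1 f2 a b
      = phi (fun w => (∏ x ∈ (univ.erase a).erase b, f1 (w x)) * ∏ x ∈ {a, b}, f2 (w x)) := by
  unfold twoPoint
  congr 1
  funext w
  rw [prod_pair hab]
  ring

lemma twoPoint_add_right (hsym : TorusSymmetric phi f1 f2) {a b : Torus d L} (hab : a ≠ b)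
    (z : Torus d L) : twoPoint phi f1 f2 (a + z) (b + z) = twoPoint phi f1 f2 a b := by
  symm
  rw [twoPoint_eq_of_ne hab, twoPoint_eq_of_ne (by simpa using hab), hsym _ _ z]
  congr 1
  funext w
  rw [prod_pair hab, prod_pair (by simpa using hab)]
  congr 1
  exact prod_equiv (Equiv.addRight z) (by simp) (by simp)

lemma twoPoint_eq_twoPoint_zero_sub (hsym : TorusSymmetric phi f1 f2) {a b : Torus d L}
    (hab : a ≠ b) : twoPoint phi f1 f2 a b = twoPoint phi f1 f2 0 (b - a) := by
  simpa [sub_eq_add_neg] using (twoPoint_add_right hsym hab (-a)).symm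

end Translation

lemma coordRep_zero (L : ℕ) [NeZero L] : coordRep L 0 = 0 := by
  simp only [coordRep, ZMod.val_zero, Nat.cast_zero]
  split_ifs <;> omega

theorem sub_sixteen_mul_le_twoPoint {d L : ℕ} [NeZero L] {Sig : Type*} (hL : Even L)
    {AL : Subalgebra ℝ (MState d L Sig → ℝ)} {phi : (MState d L Sig → ℝ) →ₗ[ℝ] ℝ}
    {f1 f2 : Sig → ℝ} {i : Fin d} (hRP : IsRP AL phi i 1) (hsym : TorusSymmetric phi f1 f2)
    (hF1 : ∀ u, site f1 u ∈ AL) (hF2 : ∀ u, site f2 u ∈ AL) {M C : ℝ}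
    (hbd : ∀ a b, twoPoint phi f1 f2 a b ≤ M)
    (hsum : C * (L : ℝ) ^ d ≤ ∑ u, twoPoint phi f1 f2 0 u) {x : Torus d L} (hx : x i ≠ 0) :
    M - 16 * (M - C) ≤ twoPoint phi f1 f2 0 x := by
  set P := posHalf d L i 1
  set θ := reflect (d := d) (L := L) i 1
  set G := twoPoint phi f1 f2
  have hθP : ∀ z, θ z ∈ P ↔ z ∉ P := fun z => reflect_mem_posHalf_one_iff hL
  obtain ⟨z₀, hz₀, hxz₀⟩ := exists_mem_posHalf_one_add_notMem hL hx
  have hz₁ : θ (x + z₀) ∈ P := (hθP _).2 hxz₀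
  have hN : 2 * (#P : ℝ) = (L : ℝ) ^ d := by exact_mod_cast card_posHalf_one hL i
  have hNpos : 0 < (#P : ℝ) := by exact_mod_cast card_pos.2 ⟨z₀, hz₀⟩
  have hcard : (Fintype.card (Torus d L) : ℝ) = (L : ℝ) ^ d := by simp
  have htrans : ∀ w ∈ P, ∀ w' ∈ P, G w (θ w') = G 0 (θ w' - w) := fun w hw w' hw' =>
    twoPoint_eq_twoPoint_zero_sub hsym fun h => (hθP w').1 (h ▸ hw) hw'
  set B := C * (L : ℝ) ^ d - ((L : ℝ) ^ d - #P) * M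
  have hsumP : ∀ F : Torus d L → Torus d L, Function.Injective F → B ≤ ∑ w ∈ P, G 0 (F w) :=
    fun F hF => (sum_univ_sub_le_sum_comp (hbd 0) P hF).trans' (by rw [hcard]; linarith)
  have hrow : ∀ w ∈ P, B ≤ ∑ w' ∈ P, G w (θ w') := fun w hw => by
    rw [sum_congr rfl (htrans w hw)]
    exact hsumP _ (sub_left_injective.comp (reflect_involutive i 1).injective)
  have hcol : ∀ w' ∈ P, B ≤ ∑ w ∈ P, G w (θ w') := fun w' hw' => by
    rw [sum_congr rfl fun w hw => htrans w hw w' hw']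
    exact hsumP _ sub_right_injective
  have key : (#P : ℝ) ^ 2 * (M - G z₀ (θ (θ (x + z₀)))) ≤ 8 * #P * (#P * M - B) :=
    sq_mul_sub_le_of_posSemidef (K := fun w w' => G w (θ w')) hz₀ hz₁
      (twoPoint_posSemidef hL hRP hF1 hF2) (fun w _ w' _ => hbd w (θ w')) hrow hcol
  have hθθ : θ (θ (x + z₀)) = x + z₀ := reflect_involutive i 1 _
  have hz₀x : z₀ ≠ x + z₀ := fun h => hx (by simpa using congrFun h i)
  have hG : G z₀ (θ (θ (x + z₀))) = G 0 x := by
    rw [hθθ]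
    exact (twoPoint_eq_twoPoint_zero_sub hsym hz₀x).trans (by rw [add_sub_cancel_right])
  rw [hG] at key
  have hMB : (#P : ℝ) * M - B = 2 * #P * (M - C) := by
    simp only [B, ← hN]
    ring
  rw [hMB] at key
  nlinarith [mul_pos hNpos hNpos]

theorem statement6_general (d : ℕ) (hd : 2 ≤ d) (Sig : ℕ → Type*)
    (AL : ∀ L : ℕ, Subalgebra ℝ (MState d L (Sig L) → ℝ))
    (phi : ∀ L : ℕ, (MState d L (Sig L) → ℝ) →ₗ[ℝ] ℝ)
    (f1 f2 : ∀ L : ℕ, Sig L → ℝ)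
    (hF1 : ∀ (L : ℕ) (x : Torus d L), site (f1 L) x ∈ AL L)
    (hF2 : ∀ (L : ℕ) (x : Torus d L), site (f2 L) x ∈ AL L)
    (hRP : ∀ (L : ℕ) [NeZero L], Even L → RPEdges (AL L) (phi L))
    (hsym : ∀ (L : ℕ) [NeZero L], Even L → TorusSymmetric (phi L) (f1 L) (f2 L))
    (C₁ : ℝ) (M : ℝ)
    (hliminf : ∀ δ : ℝ, 0 < δ → ∃ L₀ : ℕ, ∀ (L : ℕ) [NeZero L], Even L → L₀ ≤ L →
      C₁ - δ ≤ (∑ x : Torus d L, twoPoint (phi L) (f1 L) (f2 L) 0 x) / (L : ℝ) ^ d)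
    (hbd : ∀ (L : ℕ) [NeZero L], Even L → ∀ x y : Torus d L, twoPoint (phi L) (f1 L) (f2 L) x y ≤ M) :
    ∀ ε : ℝ, 0 < ε → ε < 1 / 2 → ∀ C : ℝ, C < C₁ →
      ∃ L₀ : ℕ, ∀ (L : ℕ) [NeZero L], Even L → L₀ ≤ L →
        ∀ x : Torus d L,
          (∀ i : Fin d, Odd (coordRep L (x i)) ∧ 0 < |coordRep L (x i)| ∧
            (|coordRep L (x i)| : ℝ) < ε * L) →
          M - (M - C) / (1 / 4 - ε / 2) ^ d ≤ twoPoint (phi L) (f1 L) (f2 L) 0 x := by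
  intro ε hε hε2 C hC
  obtain ⟨L₀, hL₀⟩ := hliminf (C₁ - C) (sub_pos.2 hC)
  refine ⟨L₀, fun L _ hL hLL x hx => ?_⟩
  let i : Fin d := ⟨0, by omega⟩
  have hxi : x i ≠ 0 := fun h => by simpa [h, coordRep_zero] using (hx i).2.1
  have hsum : C * (L : ℝ) ^ d ≤ ∑ u, twoPoint (phi L) (f1 L) (f2 L) 0 u := by
    have := hL₀ L hL hLL
    rwa [sub_sub_cancel, le_div_iff₀ (pow_pos (Nat.cast_pos.2 (NeZero.pos L)) d)] at this
  have hRPi : IsRP (AL L) (phi L) i 1 := hRP L hL i 1 (by have := NeZero.pos L; omega) rfl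
  have key := sub_sixteen_mul_le_twoPoint hL hRPi (hsym L hL) (hF1 L) (hF2 L) (hbd L hL) hsum hxi
  have hMC : 0 ≤ M - C := by linarith [hbd L hL 0 x]
  have h16 := sixteen_le_inv_pow (β := 1 / 4 - ε / 2) (by linarith) (by linarith) hd
  calc M - (M - C) / (1 / 4 - ε / 2) ^ d = M - (M - C) * ((1 / 4 - ε / 2) ^ d)⁻¹ := by
        rw [div_eq_mul_inv]
    _ ≤ M - (M - C) * 16 := by gcongr
    _ ≤ twoPoint (phi L) (f1 L) (f2 L) 0 x := by linarith

/-- If the Cesàro sums of the two-point functions are uniformly bounded below by `C₁ > 0` and the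
two-point functions are uniformly bounded above by `M`, then for `ε ∈ (0,1/2)`, `C < C₁` and all
large even `L`, at every point `x` whose coordinates are all odd and in `(0, εL)` one has
`G_L(o,x) ≥ M − (1/4 − ε/2)^{-d} (M − C)`. -/
theorem statement6 (d : ℕ) (hd : 2 ≤ d) (Sig : ℕ → Type*)
    (AL : ∀ L : ℕ, Subalgebra ℝ (MState d L (Sig L) → ℝ))
    (hfin : ∀ L : ℕ, FiniteDimensional ℝ (AL L))
    (phi : ∀ L : ℕ, (MState d L (Sig L) → ℝ) →ₗ[ℝ] ℝ)
    (hone : ∀ L : ℕ, phi L 1 = 1)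
    (f1 f2 : ∀ L : ℕ, Sig L → ℝ)
    (hF1 : ∀ (L : ℕ) (x : Torus d L), site (f1 L) x ∈ AL L)
    (hF2 : ∀ (L : ℕ) (x : Torus d L), site (f2 L) x ∈ AL L)
    (hRP : ∀ (L : ℕ) [NeZero L], Even L → RPEdges (AL L) (phi L))
    (hsym : ∀ (L : ℕ) [NeZero L], Even L → TorusSymmetric (phi L) (f1 L) (f2 L))
    (C₁ : ℝ) (hC₁ : 0 < C₁) (M : ℝ) (hM : 0 < M)
    (hliminf : ∀ δ : ℝ, 0 < δ → ∃ L₀ : ℕ, ∀ (L : ℕ) [NeZero L], Even L → L₀ ≤ L →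
      C₁ - δ ≤ (∑ x : Torus d L, twoPoint (phi L) (f1 L) (f2 L) 0 x) / (L : ℝ) ^ d)
    (hbd : ∀ (L : ℕ) [NeZero L], Even L → ∀ x y : Torus d L, twoPoint (phi L) (f1 L) (f2 L) x y ≤ M) :
    ∀ ε : ℝ, 0 < ε → ε < 1 / 2 → ∀ C : ℝ, C < C₁ →
      ∃ L₀ : ℕ, ∀ (L : ℕ) [NeZero L], Even L → L₀ ≤ L →
        ∀ x : Torus d L,
          (∀ i : Fin d, Odd (coordRep L (x i)) ∧ 0 < |coordRep L (x i)| ∧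
            (|coordRep L (x i)| : ℝ) < ε * L) →
          M - (M - C) / (1 / 4 - ε / 2) ^ d ≤ twoPoint (phi L) (f1 L) (f2 L) 0 x :=
  statement6_general d hd Sig AL phi f1 f2 hF1 hF2 hRP hsym C₁ M hliminf hbd

end RPPaper
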